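/- arXiv:2510.05463 — 2 statements merged into one kernel-verified Lean document; each statement's English description precedes it below -/
import Mathlib

section
/- Let E_1 ∈ ℱ_1 and let E_2 ⊆ [0,1]×Ω be measurable and non-anticipative. Then 𝒬^E is empty if and only if 𝒬̄^E is empty. -/
open MeasureTheory Set Filter Topology
open scoped ENNReal

noncomputable section

/-- `ℝ^d`. -/
abbrev Eucl (d : ℕ) : Type := EuclideanSpace ℝ (Fin d)

/-- A function indexed by a linearly ordered topological space is càdlàg if it is
right-continuous at every point and has left limits at every point. -/
def Cadlag {α : Type*} [TopologicalSpace α] [LinearOrder α] {β : Type*} [TopologicalSpace β]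
    (f : α → β) : Prop :=
  (∀ t : α, Tendsto f (𝓝[>] t) (𝓝 (f t))) ∧ (∀ t : α, ∃ L : β, Tendsto f (𝓝[<] t) (𝓝 L))

/-- The canonical path space `Ω`: càdlàg paths `ω : [0,1] → ℝ^d`. -/
def PathSpace (d : ℕ) : Type := {ω : unitInterval → Eucl d // Cadlag ω}

/-- The canonical filtration `ℱ_t := σ(X_s : s ≤ t)` on the path space. -/
def pathF (d : ℕ) (t : unitInterval) : MeasurableSpace (PathSpace d) :=
  ⨆ s : unitInterval, ⨆ _ : s ≤ t, MeasurableSpace.comap (fun ω : PathSpace d => ω.1 s) inferInstance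

/-- The σ-algebra `ℱ_1` on `Ω`. -/
instance instMSPathSpace (d : ℕ) : MeasurableSpace (PathSpace d) := pathF d 1

/-- Lebesgue measure `λ` on `[0,1]`. -/
def lebI : Measure unitInterval := (volume : Measure ℝ).comap Subtype.val

/-- `X` is a square-integrable martingale under `P` (w.r.t. the canonical filtration):
`E^P‖X_t‖² < ∞` for all `t` and `E^P[X_t | ℱ_s] = X_s` `P`-a.s. for all `s ≤ t`. -/
def IsSqIntMart (d : ℕ) (P : Measure (PathSpace d)) : Prop :=
  (∀ t : unitInterval, Integrable (fun ω : PathSpace d => ‖ω.1 t‖ ^ 2) P) ∧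
  (∀ s t : unitInterval, s ≤ t →
    (fun ω : PathSpace d => ω.1 s) =ᵐ[P] P[fun ω : PathSpace d => ω.1 t | pathF d s])

/-- `𝒬`: probability measures on `(Ω, ℱ_1)` under which `X` is a square-integrable martingale. -/
def QSet (d : ℕ) : Set (Measure (PathSpace d)) :=
  {P | IsProbabilityMeasure P ∧ IsSqIntMart d P}

lemma cadlag_stop {d : ℕ} (ω : PathSpace d) (t : unitInterval) :
    Cadlag (fun s => ω.1 (min s t)) := by
  constructor
  · intro s
    rcases le_or_gt t s with h | h
    · have hev : ∀ᶠ s' in 𝓝[>] s, ω.1 (min s' t) = ω.1 (min s t) := by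
        filter_upwards [self_mem_nhdsWithin] with s' hs'
        have h1 : min s' t = t := min_eq_right (le_of_lt (lt_of_le_of_lt h hs'))
        have h2 : min s t = t := min_eq_right h
        rw [h1, h2]
      exact Tendsto.congr' (by filter_upwards [hev] with a ha using ha.symm) tendsto_const_nhds
    · have hmem : Iio t ∈ 𝓝[>] s := nhdsWithin_le_nhds (Iio_mem_nhds h)
      have hev : ∀ᶠ s' in 𝓝[>] s, ω.1 s' = ω.1 (min s' t) := by
        filter_upwards [hmem] with s' hs'
        rw [min_eq_left (le_of_lt hs')]
      have hmin : min s t = s := min_eq_left h.le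
      refine Tendsto.congr' hev ?_
      show Tendsto (fun s' => ω.1 s') (𝓝[>] s) (𝓝 (ω.1 (min s t)))
      rw [hmin]
      exact ω.2.1 s
  · intro s
    rcases le_or_gt s t with h | h
    · obtain ⟨L, hL⟩ := ω.2.2 s
      refine ⟨L, ?_⟩
      have hev : ∀ᶠ s' in 𝓝[<] s, ω.1 s' = ω.1 (min s' t) := by
        filter_upwards [self_mem_nhdsWithin] with s' hs'
        rw [min_eq_left (le_of_lt (lt_of_lt_of_le hs' h))]
      exact Tendsto.congr' hev hL
    · refine ⟨ω.1 t, ?_⟩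
      have hmem : Ioi t ∈ 𝓝[<] s := nhdsWithin_le_nhds (Ioi_mem_nhds h)
      have hev : ∀ᶠ s' in 𝓝[<] s, ω.1 (min s' t) = ω.1 t := by
        filter_upwards [hmem] with s' hs'
        rw [min_eq_right (le_of_lt hs')]
      exact Tendsto.congr' (by filter_upwards [hev] with a ha using ha.symm) tendsto_const_nhds

/-- The stopped path `ω_{·∧t}`. -/
def stopPath {d : ℕ} (ω : PathSpace d) (t : unitInterval) : PathSpace d :=
  ⟨fun s => ω.1 (min s t), cadlag_stop ω t⟩

/-- A set `E₂ ⊆ [0,1] × Ω` is non-anticipative if `(t,ω) ∈ E₂ ⇔ (t, ω_{·∧t}) ∈ E₂`. -/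
def NonAnticipativeSet {d : ℕ} (E₂ : Set (unitInterval × PathSpace d)) : Prop :=
  ∀ p : unitInterval × PathSpace d, p ∈ E₂ ↔ (p.1, stopPath p.2 p.1) ∈ E₂

/-- A function `Z` on `[0,1] × Ω` is non-anticipative if `Z(t,ω) = Z(t, ω_{·∧t})`. -/
def NonAnticipativeFun {d : ℕ} (Z : unitInterval × PathSpace d → ℝ) : Prop :=
  ∀ p : unitInterval × PathSpace d, Z p = Z (p.1, stopPath p.2 p.1)

/-- The enlarged space `Ω̄ := [0,1] × Ω`. -/
abbrev OmegaBar (d : ℕ) : Type := unitInterval × PathSpace d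

/-- The enlarged filtration `ℱ̄_t := σ((θ,ω) ↦ θ∧t) ∨ σ((θ,ω) ↦ ω(s) : s ≤ t)`. -/
def barF (d : ℕ) (t : unitInterval) : MeasurableSpace (OmegaBar d) :=
  MeasurableSpace.comap (fun p : OmegaBar d => min p.1 t) inferInstance ⊔
  ⨆ s : unitInterval, ⨆ _ : s ≤ t,
    MeasurableSpace.comap (fun p : OmegaBar d => p.2.1 s) inferInstance

/-- `(θ,ω) ↦ X_t(ω)` is a square-integrable martingale w.r.t. `(ℱ̄_t)` under `μ`. -/
def IsSqIntMartBar (d : ℕ) (μ : Measure (OmegaBar d)) : Prop :=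
  (∀ t : unitInterval, Integrable (fun p : OmegaBar d => ‖p.2.1 t‖ ^ 2) μ) ∧
  (∀ s t : unitInterval, s ≤ t →
    (fun p : OmegaBar d => p.2.1 s) =ᵐ[μ] μ[fun p : OmegaBar d => p.2.1 t | barF d s])

/-- `𝒬̄`: probability measures on `Ω̄` under which `X` is a square-integrable `ℱ̄`-martingale. -/
def QBar (d : ℕ) : Set (Measure (OmegaBar d)) :=
  {μ | IsProbabilityMeasure μ ∧ IsSqIntMartBar d μ}

/-- `𝒬^E`. -/
def QE (d : ℕ) (E₁ : Set (PathSpace d)) (E₂ : Set (unitInterval × PathSpace d)) :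
    Set (Measure (PathSpace d)) :=
  {P | P ∈ QSet d ∧ P E₁ = 1 ∧ (lebI.prod P) E₂ = 1}

/-- `𝒬̄^E`. -/
def QEBar (d : ℕ) (E₁ : Set (PathSpace d)) (E₂ : Set (unitInterval × PathSpace d)) :
    Set (Measure (OmegaBar d)) :=
  {μ | μ ∈ QBar d ∧ μ (univ ×ˢ E₁) = 1 ∧
    (lebI.prod μ) {q : unitInterval × OmegaBar d | (q.1, q.2.2) ∈ E₂} = 1}

/-- The augmented filtration `ℱ^P_t := ℱ_t ∨ σ(P-null sets of ℱ_1)`. -/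
def augF (d : ℕ) (P : Measure (PathSpace d)) (t : unitInterval) :
    MeasurableSpace (PathSpace d) :=
  pathF d t ⊔ MeasurableSpace.generateFrom {N : Set (PathSpace d) | P N = 0}

/-- `τ` is a `[0,1]`-valued `𝔽^P`-stopping time. -/
def IsStopTime (d : ℕ) (P : Measure (PathSpace d)) (τ : PathSpace d → unitInterval) : Prop :=
  ∀ t : unitInterval, MeasurableSet[augF d P t] {ω : PathSpace d | τ ω ≤ t}

/-- `Z : [0,1] × Ω → ℝ` is `𝔽`-progressively measurable: for each `t ∈ [0,1]` the restriction
of `Z` to `[0,t] × Ω` is `Borel([0,t]) ⊗ ℱ_t`-measurable. -/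
def ProgMeas {d : ℕ} (Z : unitInterval × PathSpace d → ℝ) : Prop :=
  ∀ t : unitInterval,
    @Measurable ({s : unitInterval // s ≤ t} × PathSpace d) ℝ
      (@Prod.instMeasurableSpace _ _ inferInstance (pathF d t)) _
      (fun q => Z (q.1.1, q.2))

/-- `ψ : [0,1] × Ω → ℝ` is `𝔽^P`-progressively measurable. -/
def ProgMeasAug {d : ℕ} (P : Measure (PathSpace d)) (ψ : unitInterval × PathSpace d → ℝ) : Prop :=
  ∀ t : unitInterval,
    @Measurable ({s : unitInterval // s ≤ t} × PathSpace d) ℝ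
      (@Prod.instMeasurableSpace _ _ inferInstance (augF d P t)) _
      (fun q => ψ (q.1.1, q.2))

/-- The integral of `f` against `P` with values in `EReal` (allowed to be `±∞`). -/
def intE {α : Type*} [MeasurableSpace α] (P : Measure α) (f : α → ℝ) : EReal :=
  ((∫⁻ a, ENNReal.ofReal (f a) ∂P : ℝ≥0∞) : EReal) -
    ((∫⁻ a, ENNReal.ofReal (-(f a)) ∂P : ℝ≥0∞) : EReal)

/-- `μ` is `ε`-modified: `μ({1}×Γ) ≥ ε·μ^Ω(Γ)` for all `Γ ∈ ℱ_1`. -/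
def EpsModified {d : ℕ} (ε : ℝ) (μ : Measure (OmegaBar d)) : Prop :=
  ∀ Γ : Set (PathSpace d), MeasurableSet[pathF d 1] Γ →
    ENNReal.ofReal ε * (μ.map Prod.snd) Γ ≤ μ ({(1 : unitInterval)} ×ˢ Γ)

/-!
Both classes are images of each other under natural maps. Projecting `μ ∈ 𝒬̄^E` onto `Ω` gives an
element of `𝒬^E`, and conversely `P ∈ 𝒬^E` is carried to the slice `θ = 1` of `Ω̄` by
`ω ↦ (1, ω)`. In both directions the martingale property survives because conditional
expectations descend along a pushforward whose map pulls the target filtration back into the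
source one (`ℱ_t` into `ℱ̄_t` under the projection; `ℱ̄_t` into `ℱ_t` on the slice, where
`θ ∧ t` is constant). The constraints on `E₁, E₂` transfer because a pushforward gives any set
at least the mass of its preimage, and under a probability measure mass one cannot increase.
-/

theorem MeasureTheory.ae_eq_condExp_map {α β E : Type*} {m' mα : MeasurableSpace α}
    {m mβ : MeasurableSpace β} [NormedAddCommGroup E] [NormedSpace ℝ E] [CompleteSpace E]
    {μ : Measure α} [IsFiniteMeasure μ] {f : α → β} (hf : Measurable f) (hm : m ≤ mβ)
    (hm' : m' ≤ mα) (hfm : m.comap f ≤ m') {X Y : β → E} (hX : StronglyMeasurable[m] X)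
    (hXi : Integrable X (μ.map f)) (hYi : Integrable Y (μ.map f))
    (h : X ∘ f =ᵐ[μ] μ[Y ∘ f | m']) :
    X =ᵐ[μ.map f] (μ.map f)[Y | m] := by
  have hYf : Integrable (Y ∘ f) μ := hYi.comp_measurable hf
  refine ae_eq_condExp_of_forall_setIntegral_eq hm hYi (fun A _ _ => hXi.integrableOn)
    (fun A hA _ => ?_) hX.aestronglyMeasurable
  have hfA : MeasurableSet[m'] (f ⁻¹' A) := hfm _ ⟨A, hA, rfl⟩
  rw [setIntegral_map (hm A hA) (hX.mono hm).aestronglyMeasurable hf.aemeasurable,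
    setIntegral_map (hm A hA) hYi.aestronglyMeasurable hf.aemeasurable]
  calc ∫ a in f ⁻¹' A, X (f a) ∂μ = ∫ a in f ⁻¹' A, (μ[Y ∘ f | m']) a ∂μ :=
        setIntegral_congr_ae (hm' _ hfA) (h.mono fun a ha _ => ha)
    _ = ∫ a in f ⁻¹' A, Y (f a) ∂μ := setIntegral_condExp hm' hYf hfA

theorem MeasureTheory.Measure.map_apply_eq_one_of_preimage {α β : Type*} [MeasurableSpace α]
    [MeasurableSpace β] {μ : Measure α} [IsProbabilityMeasure μ] {f : α → β} (hf : Measurable f)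
    {s : Set β}
    (h : μ (f ⁻¹' s) = 1) : μ.map f s = 1 :=
  have := Measure.isProbabilityMeasure_map (μ := μ) hf.aemeasurable
  le_antisymm prob_le_one (h ▸ Measure.le_map_apply hf.aemeasurable s)

instance : IsProbabilityMeasure lebI :=
  inferInstanceAs (IsProbabilityMeasure (volume : Measure unitInterval))

theorem MeasureTheory.Integrable.of_integrable_sq_norm {α E : Type*} [MeasurableSpace α]
    [NormedAddCommGroup E] {μ : Measure α} [IsFiniteMeasure μ] {X : α → E}
    (hX : AEStronglyMeasurable X μ)
    (h : Integrable (fun a => ‖X a‖ ^ 2) μ) : Integrable X μ :=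
  ((memLp_two_iff_integrable_sq_norm hX).2 h).integrable one_le_two

theorem lebI_prod_map {α β : Type*} [MeasurableSpace α] [MeasurableSpace β] (μ : Measure α)
    [SFinite μ] {f : α → β} (hf : Measurable f) :
    lebI.prod (μ.map f) = (lebI.prod μ).map (Prod.map id f) := by
  rw [← Measure.map_prod_map _ _ measurable_id hf, Measure.map_id]

namespace PathSpace

variable {d : ℕ}

theorem measurable_eval_pathF {s t : unitInterval} (h : s ≤ t) :
    Measurable[pathF d t] (fun ω : PathSpace d => ω.1 s) :=
  Measurable.of_comap_le (le_iSup₂ (f := fun (u : unitInterval) (_ : u ≤ t) =>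
    MeasurableSpace.comap (fun ω : PathSpace d => ω.1 u) inferInstance) s h)

theorem pathF_le (t : unitInterval) : pathF d t ≤ instMSPathSpace d :=
  iSup₂_le fun _ hs => (measurable_eval_pathF (hs.trans unitInterval.le_one')).comap_le

theorem measurable_eval (t : unitInterval) : Measurable (fun ω : PathSpace d => ω.1 t) :=
  measurable_eval_pathF unitInterval.le_one'

theorem barF_le (t : unitInterval) : barF d t ≤ (inferInstance : MeasurableSpace (OmegaBar d)) :=
  sup_le (measurable_fst.min measurable_const).comap_le
    (iSup₂_le fun s _ => ((measurable_eval s).comp measurable_snd).comap_le)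

theorem comap_snd_pathF_le_barF (t : unitInterval) :
    (pathF d t).comap Prod.snd ≤ barF d t := by
  rw [pathF, MeasurableSpace.comap_iSup]
  refine iSup_le fun s => ?_
  rw [MeasurableSpace.comap_iSup]
  refine iSup_le fun hs => ?_
  rw [MeasurableSpace.comap_comp]
  exact le_sup_of_le_right (le_iSup₂ (f := fun (u : unitInterval) (_ : u ≤ t) =>
    MeasurableSpace.comap (fun p : OmegaBar d => p.2.1 u) inferInstance) s hs)

theorem comap_mk_one_barF_le_pathF (t : unitInterval) :
    (barF d t).comap (Prod.mk 1) ≤ pathF d t := by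
  rw [barF, MeasurableSpace.comap_sup, MeasurableSpace.comap_comp]
  refine sup_le ?_ ?_
  · rw [show (fun p : OmegaBar d => min p.1 t) ∘ Prod.mk 1 = fun _ => min 1 t from rfl,
      MeasurableSpace.comap_const]
    exact bot_le
  · rw [MeasurableSpace.comap_iSup]
    refine iSup_le fun s => ?_
    rw [MeasurableSpace.comap_iSup]
    refine iSup_le fun hs => ?_
    rw [MeasurableSpace.comap_comp]
    exact (measurable_eval_pathF hs).comap_le

theorem isSqIntMart_map_snd {μ : Measure (OmegaBar d)} [IsFiniteMeasure μ]
    (hμ : IsSqIntMartBar d μ) : IsSqIntMart d (μ.map Prod.snd) := by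
  obtain ⟨hsq, hmart⟩ := hμ
  have hsq' (t : unitInterval) :
      Integrable (fun ω : PathSpace d => ‖ω.1 t‖ ^ 2) (μ.map Prod.snd) :=
    (integrable_map_measure ((measurable_eval t).norm.pow_const 2).aestronglyMeasurable
      measurable_snd.aemeasurable).2 (hsq t)
  have hint (t : unitInterval) : Integrable (fun ω : PathSpace d => ω.1 t) (μ.map Prod.snd) :=
    .of_integrable_sq_norm (measurable_eval t).aestronglyMeasurable (hsq' t)
  exact ⟨hsq', fun s t hst => ae_eq_condExp_map measurable_snd (pathF_le s) (barF_le s)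
    (comap_snd_pathF_le_barF s) (measurable_eval_pathF le_rfl).stronglyMeasurable (hint s)
    (hint t) (hmart s t hst)⟩

theorem isSqIntMartBar_map_mk_one {P : Measure (PathSpace d)} [IsFiniteMeasure P]
    (hP : IsSqIntMart d P) : IsSqIntMartBar d (P.map (Prod.mk 1)) := by
  obtain ⟨hsq, hmart⟩ := hP
  have hsq' (t : unitInterval) :
      Integrable (fun p : OmegaBar d => ‖p.2.1 t‖ ^ 2) (P.map (Prod.mk 1)) :=
    (integrable_map_measure
      (((measurable_eval t).comp measurable_snd).norm.pow_const 2).aestronglyMeasurable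
      measurable_prodMk_left.aemeasurable).2 (hsq t)
  have hint (t : unitInterval) :
      Integrable (fun p : OmegaBar d => p.2.1 t) (P.map (Prod.mk 1)) :=
    .of_integrable_sq_norm ((measurable_eval t).comp measurable_snd).aestronglyMeasurable
      (hsq' t)
  have hmeas (s : unitInterval) : Measurable[barF d s] (fun p : OmegaBar d => p.2.1 s) :=
    (measurable_eval_pathF le_rfl).comp (Measurable.of_comap_le (comap_snd_pathF_le_barF s))
  exact ⟨hsq', fun s t hst => ae_eq_condExp_map measurable_prodMk_left (barF_le s)
    (pathF_le s) (comap_mk_one_barF_le_pathF s) (hmeas s).stronglyMeasurable (hint s) (hint t)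
    (hmart s t hst)⟩

variable {E₁ : Set (PathSpace d)} {E₂ : Set (unitInterval × PathSpace d)}

theorem map_snd_mem_QE {μ : Measure (OmegaBar d)} (hμ : μ ∈ QEBar d E₁ E₂) :
    μ.map Prod.snd ∈ QE d E₁ E₂ := by
  obtain ⟨⟨hprob, hmart⟩, h₁, h₂⟩ := hμ
  refine ⟨⟨Measure.isProbabilityMeasure_map measurable_snd.aemeasurable,
    isSqIntMart_map_snd hmart⟩, Measure.map_apply_eq_one_of_preimage measurable_snd ?_, ?_⟩
  · rwa [← univ_prod]
  · rw [lebI_prod_map μ measurable_snd]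
    exact Measure.map_apply_eq_one_of_preimage (measurable_id.prodMap measurable_snd) h₂

theorem map_mk_one_mem_QEBar {P : Measure (PathSpace d)} (hP : P ∈ QE d E₁ E₂) :
    P.map (Prod.mk 1) ∈ QEBar d E₁ E₂ := by
  obtain ⟨⟨hprob, hmart⟩, h₁, h₂⟩ := hP
  refine ⟨⟨Measure.isProbabilityMeasure_map measurable_prodMk_left.aemeasurable,
    isSqIntMartBar_map_mk_one hmart⟩,
    Measure.map_apply_eq_one_of_preimage measurable_prodMk_left ?_, ?_⟩
  · rwa [mk_preimage_prod_right (mem_univ _)]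
  · rw [lebI_prod_map P measurable_prodMk_left]
    exact Measure.map_apply_eq_one_of_preimage (measurable_id.prodMap measurable_prodMk_left) h₂

end PathSpace

theorem QE_empty_iff_QEBar_empty_general (d : ℕ)
    (E₁ : Set (PathSpace d))
    (E₂ : Set (unitInterval × PathSpace d)) :
    QE d E₁ E₂ = ∅ ↔ QEBar d E₁ E₂ = ∅ := by
  simp only [eq_empty_iff_forall_notMem]
  exact ⟨fun h μ hμ => h _ (PathSpace.map_snd_mem_QE hμ),
    fun h P hP => h _ (PathSpace.map_mk_one_mem_QEBar hP)⟩

/-- `𝒬^E` is empty if and only if `𝒬̄^E` is empty. -/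
theorem QE_empty_iff_QEBar_empty (d : ℕ) (hd : 1 ≤ d)
    (E₁ : Set (PathSpace d)) (hE₁ : MeasurableSet[pathF d 1] E₁)
    (E₂ : Set (unitInterval × PathSpace d)) (hE₂ : MeasurableSet E₂)
    (hE₂na : NonAnticipativeSet E₂) :
    QE d E₁ E₂ = ∅ ↔ QEBar d E₁ E₂ = ∅ :=
  QE_empty_iff_QEBar_empty_general d E₁ E₂

end
end

section
/- Let C : ℝ → ℝ be measurable and integrable on [0,1), and suppose that for every a ∈ [0,1), ∫_0^a C(r) dr = (a − 1)·C(a). Then C(a) = 0 for every a ∈ [0,1). -/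
/-!
Put `F a = ∫₀ᵃ C`. The hypothesis says `C = F / (a - 1)`, so `C` inherits the continuity of
`F` on `[0, 1)`; by the fundamental theorem of calculus `F` then solves `F' = F / (a - 1)`, which
makes `F a / (a - 1)`, that is `C a`, constant. Its value is `C 0 = -F 0 = 0`.
-/

open MeasureTheory Set

theorem hasDerivAt_integral_of_continuousOn_Ioo {E : Type*} [NormedAddCommGroup E]
    [NormedSpace ℝ E] [CompleteSpace E] {f : ℝ → E} {a b : ℝ}
    (hint : IntegrableOn f (Icc a b)) (hcont : ContinuousOn f (Ioo a b)) {x : ℝ}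
    (hx : x ∈ Ioo a b) : HasDerivAt (fun y => ∫ t in a..y, f t) (f x) x :=
  intervalIntegral.integral_hasDerivAt_right
    ((intervalIntegrable_iff_integrableOn_Icc_of_le hx.1.le).2
      (hint.mono_set (Icc_subset_Icc_right hx.2.le)))
    (hcont.stronglyMeasurableAtFilter isOpen_Ioo x hx) (hcont.continuousAt (Ioo_mem_nhds hx.1 hx.2))

theorem div_sub_eq_of_hasDerivAt_div_sub {F : ℝ → ℝ} {a b c : ℝ} (hc : c ∉ Icc a b)
    (hF : ContinuousOn F (Icc a b)) (hF' : ∀ x ∈ Ioo a b, HasDerivAt F (F x / (x - c)) x) :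
    ∀ x ∈ Icc a b, F x / (x - c) = F a / (a - c) := by
  have hne : ∀ x ∈ Icc a b, x - c ≠ 0 := fun x hx hxc => hc (by rwa [sub_eq_zero.1 hxc] at hx)
  intro x hx
  rcases hx.1.eq_or_lt with rfl | hax
  · rfl
  have hcont : ContinuousOn (fun y => F y / (y - c)) (Icc a x) :=
    ((hF.mono (Icc_subset_Icc_right hx.2)).div (continuousOn_id.sub continuousOn_const))
      fun y hy => hne y ⟨hy.1, hy.2.trans hx.2⟩
  have hderiv : ∀ y ∈ Ioo a x, HasDerivAt (fun y => F y / (y - c)) 0 y := by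
    intro y hy
    have hyc := hne y ⟨hy.1.le, hy.2.le.trans hx.2⟩
    have := (hF' y ⟨hy.1, hy.2.trans_le hx.2⟩).div ((hasDerivAt_id y).sub_const c) hyc
    rwa [id, div_mul_cancel₀ _ hyc, mul_one, sub_self, zero_div] at this
  obtain ⟨y, -, hy⟩ := exists_hasDerivAt_eq_slope _ _ hax hcont hderiv
  rw [eq_comm, div_eq_zero_iff, sub_eq_zero] at hy
  exact hy.resolve_right (sub_ne_zero.2 hax.ne')

theorem eq_zero_of_integral_eq_general (C : ℝ → ℝ)
    (hint : IntegrableOn C (Set.Ico (0 : ℝ) 1) volume)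
    (h : ∀ a ∈ Set.Ico (0 : ℝ) 1, ∫ r in Set.Icc (0 : ℝ) a, C r = (a - 1) * C a) :
    ∀ a ∈ Set.Ico (0 : ℝ) 1, C a = 0 := by
  set F : ℝ → ℝ := fun y => ∫ t in (0 : ℝ)..y, C t
  have hint' : IntegrableOn C (Icc 0 1) := by
    rwa [integrableOn_Icc_iff_integrableOn_Ico]
  have hFC : ∀ x ∈ Ico (0 : ℝ) 1, C x = F x / (x - 1) := fun x hx => by
    simp only [F]
    rw [intervalIntegral.integral_of_le hx.1, ← integral_Icc_eq_integral_Ioc, h x hx,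
      mul_div_cancel_left₀ _ (sub_ne_zero.2 hx.2.ne)]
  have hFcont : ContinuousOn F (Icc 0 1) := by
    simpa using intervalIntegral.continuousOn_primitive_interval (a := 0) (b := 1) (by simpa)
  have hCcont : ContinuousOn C (Ioo 0 1) :=
    ((hFcont.mono Ioo_subset_Icc_self).div (continuousOn_id.sub continuousOn_const)
      fun x hx => sub_ne_zero.2 hx.2.ne).congr fun x hx => hFC x (Ioo_subset_Ico_self hx)
  intro a ha
  have hFa := div_sub_eq_of_hasDerivAt_div_sub (a := 0) (b := a) (c := 1) (by simp [ha.2])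
    (hFcont.mono (Icc_subset_Icc_right ha.2.le))
    (fun x hx => hFC x ⟨hx.1.le, hx.2.trans ha.2⟩ ▸
      hasDerivAt_integral_of_continuousOn_Ioo hint' hCcont ⟨hx.1, hx.2.trans ha.2⟩)
    a ⟨ha.1, le_rfl⟩
  simpa [F, ← hFC a ha] using hFa

/-- if `C : ℝ → ℝ` is measurable and integrable on `[0,1)` and
`∫₀ᵃ C(r) dr = (a−1)·C(a)` for every `a ∈ [0,1)`, then `C ≡ 0` on `[0,1)`. -/
theorem eq_zero_of_integral_eq (C : ℝ → ℝ) (hmeas : Measurable C)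
    (hint : IntegrableOn C (Set.Ico (0 : ℝ) 1) volume)
    (h : ∀ a ∈ Set.Ico (0 : ℝ) 1, ∫ r in Set.Icc (0 : ℝ) a, C r = (a - 1) * C a) :
    ∀ a ∈ Set.Ico (0 : ℝ) 1, C a = 0 :=
  eq_zero_of_integral_eq_general C hint h
end
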